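/- arXiv:2509.05272 — 2 statements merged into one kernel-verified Lean document; each statement's English description precedes it below -/
import Mathlib

section
/- Let G be a Lie group with a right-invariant metric d^G, Γ ≤ G a discrete subgroup, X = G/Γ with the quotient metric d^X, and a ∈ G. Let K ⊆ X be a compact a-invariant set and ε₀ > 0 smaller than the injectivity radius of K (so that g ↦ gx is an isometry from B^G(1,ε₀) onto B^X(x,ε₀) for each x ∈ K). Then there exists ε = ε(ε₀,a) > 0 such that for every x ∈ K and every n ≥ 1, the map g ↦ gx is an isometric surjection from the Bowen ball D_n^G(1,ε) = {g : d^G(a^j g a^{-j},1) ≤ ε for 0 ≤ j ≤ n−1} onto the Bowen ball D_n^X(x,ε) = {y : d^X(a^j y, a^j x) ≤ ε for 0 ≤ j ≤ n−1}. -/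
theorem exists_pos_dist_conj_lt {G : Type*} [Group G] [MetricSpace G] [IsTopologicalGroup G]
    (a : G) {ε₀ : ℝ} (hε₀ : 0 < ε₀) :
    ∃ ε > (0 : ℝ), ε < ε₀ ∧ ∀ g : G, dist g 1 ≤ ε → dist (a * g * a⁻¹) 1 < ε₀ := by
  have hconj : ContinuousAt (fun g : G => a * g * a⁻¹) 1 := by fun_prop
  obtain ⟨δ, hδ, hball⟩ := Metric.continuousAt_iff.mp hconj ε₀ hε₀
  refine ⟨min (δ / 2) (ε₀ / 2), by positivity, by linarith [min_le_right (δ / 2) (ε₀ / 2)],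
    fun g hg => ?_⟩
  simpa using hball (hg.trans_lt (by linarith [min_le_left (δ / 2) (ε₀ / 2)]))

theorem pow_smul_mem {G X : Type*} [Monoid G] [MulAction G X] {a : G} {K : Set X}
    (hK : ∀ x ∈ K, a • x ∈ K) (j : ℕ) {x : X} (hx : x ∈ K) : a ^ j • x ∈ K := by
  simpa [smul_iterate] using (Set.MapsTo.iterate hK j) hx

theorem conj_smul_smul {G X : Type*} [Group G] [MulAction G X] (h g : G) (x : X) :
    (h * g * h⁻¹) • h • x = h • g • x := by
  rw [smul_smul, inv_mul_cancel_right, mul_smul]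

section OrbitMap

variable {G X : Type*} [Group G] [MetricSpace G] [MetricSpace X] [MulAction G X] {ε₀ : ℝ}

theorem dist_smul_smul_eq_dist_conj {h g : G} {x : X}
    (hiso : ∀ g g' : G, dist g 1 < ε₀ → dist g' 1 < ε₀ → dist (g • h • x) (g' • h • x) = dist g g')
    (hε₀ : 0 < ε₀) (hg : dist (h * g * h⁻¹) 1 < ε₀) :
    dist (h • g • x) (h • x) = dist (h * g * h⁻¹) 1 := by
  simpa [conj_smul_smul] using hiso _ 1 hg (by simpa using hε₀)

/-- By induction on `j`: conjugating the `ε`-small `aʲ g a⁻ʲ` by `a` lands in the `ε₀`-ball, where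
the orbit map at `aʲ⁺¹ • x ∈ K` is isometric, so its size equals `dist (aʲ⁺¹ • g • x) (aʲ⁺¹ • x)`. -/
theorem dist_pow_conj_le {a : G} {K : Set X} (hK : ∀ x ∈ K, a • x ∈ K)
    (hiso : ∀ x ∈ K, ∀ g g' : G, dist g 1 < ε₀ → dist g' 1 < ε₀ →
      dist (g • x) (g' • x) = dist g g')
    (hε₀ : 0 < ε₀) {ε : ℝ} (hconj : ∀ g : G, dist g 1 ≤ ε → dist (a * g * a⁻¹) 1 < ε₀)
    {x : X} (hx : x ∈ K) {n : ℕ} {g : G} (hg : dist g 1 ≤ ε)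
    (hgx : ∀ j < n, dist (a ^ j • g • x) (a ^ j • x) ≤ ε) :
    ∀ j < n, dist (a ^ j * g * (a ^ j)⁻¹) 1 ≤ ε := by
  intro j hj
  induction j with
  | zero => simpa using hg
  | succ j ih =>
    have hsucc : a ^ (j + 1) * g * (a ^ (j + 1))⁻¹ = a * (a ^ j * g * (a ^ j)⁻¹) * a⁻¹ := by
      group
    have hlt : dist (a ^ (j + 1) * g * (a ^ (j + 1))⁻¹) 1 < ε₀ :=
      hsucc ▸ hconj _ (ih (by omega))
    rw [← dist_smul_smul_eq_dist_conj (hiso _ (pow_smul_mem hK (j + 1) hx)) hε₀ hlt]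
    exact hgx (j + 1) hj

end OrbitMap

theorem stmt_5_general {G X : Type*} [Group G] [MetricSpace G] [IsTopologicalGroup G]
    [MetricSpace X] [MulAction G X]
    (a : G) (K : Set X) (hKinv : ∀ x ∈ K, a • x ∈ K)
    (ε₀ : ℝ) (hε₀ : 0 < ε₀)
    (hinj : ∀ x ∈ K,
      (∀ g g' : G, dist g 1 < ε₀ → dist g' 1 < ε₀ →
        dist (g • x) (g' • x) = dist g g') ∧
      (∀ y : X, dist y x < ε₀ → ∃ g : G, dist g 1 < ε₀ ∧ y = g • x)) :
    ∃ ε > (0 : ℝ), ∀ x ∈ K, ∀ n : ℕ, 1 ≤ n →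
      (∀ g : G, (∀ j < n, dist (a ^ j * g * (a ^ j)⁻¹) 1 ≤ ε) →
        ∀ j < n, dist ((a ^ j) • (g • x)) ((a ^ j) • x) ≤ ε) ∧
      (∀ g g' : G, (∀ j < n, dist (a ^ j * g * (a ^ j)⁻¹) 1 ≤ ε) →
        (∀ j < n, dist (a ^ j * g' * (a ^ j)⁻¹) 1 ≤ ε) →
        dist (g • x) (g' • x) = dist g g') ∧
      (∀ y : X, (∀ j < n, dist ((a ^ j) • y) ((a ^ j) • x) ≤ ε) →
        ∃ g : G, (∀ j < n, dist (a ^ j * g * (a ^ j)⁻¹) 1 ≤ ε) ∧ y = g • x) := by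
  obtain ⟨ε, hε, hεε₀, hconj⟩ := exists_pos_dist_conj_lt a hε₀
  have hiso x (hx : x ∈ K) := (hinj x hx).1
  refine ⟨ε, hε, fun x hx n hn => ⟨?_, ?_, ?_⟩⟩
  · intro g hg j hj
    rw [dist_smul_smul_eq_dist_conj (hiso _ (pow_smul_mem hKinv j hx)) hε₀
      ((hg j hj).trans_lt hεε₀)]
    exact hg j hj
  · intro g g' hg hg'
    exact hiso x hx g g' (by simpa using (hg 0 hn).trans_lt hεε₀)
      (by simpa using (hg' 0 hn).trans_lt hεε₀)
  · intro y hy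
    obtain ⟨g, hg, rfl⟩ := (hinj x hx).2 y (by simpa using (hy 0 hn).trans_lt hεε₀)
    have hgε : dist g 1 ≤ ε := by
      have hdist := hiso x hx g 1 hg (by simpa using hε₀)
      rw [one_smul] at hdist
      simpa [hdist] using hy 0 hn
    exact ⟨g, dist_pow_conj_le hKinv hiso hε₀ hconj hx hgε hy, rfl⟩

/-- Bowen balls in `X = G/Γ`, abstracted as a `G`-action: if the orbit map at every
point of a compact `a`-invariant set `K` is an isometric surjection from the
`ε₀`-ball of `G` onto the `ε₀`-ball of `X`, then there is `ε > 0` such that for all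
`x ∈ K` and `n ≥ 1` the orbit map is an isometric surjection from the `n`-Bowen ball
of `G` at `1` onto the `n`-Bowen ball of `X` at `x`. -/
theorem stmt_5 {G X : Type*} [Group G] [MetricSpace G] [IsTopologicalGroup G]
    [MetricSpace X] [MulAction G X]
    (hrinv : ∀ g h x : G, dist (g * x) (h * x) = dist g h)
    (a : G) (K : Set X) (hK : IsCompact K) (hKinv : ∀ x ∈ K, a • x ∈ K)
    (ε₀ : ℝ) (hε₀ : 0 < ε₀)
    (hinj : ∀ x ∈ K,
      (∀ g g' : G, dist g 1 < ε₀ → dist g' 1 < ε₀ →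
        dist (g • x) (g' • x) = dist g g') ∧
      (∀ y : X, dist y x < ε₀ → ∃ g : G, dist g 1 < ε₀ ∧ y = g • x)) :
    ∃ ε > (0 : ℝ), ∀ x ∈ K, ∀ n : ℕ, 1 ≤ n →
      (∀ g : G, (∀ j < n, dist (a ^ j * g * (a ^ j)⁻¹) 1 ≤ ε) →
        ∀ j < n, dist ((a ^ j) • (g • x)) ((a ^ j) • x) ≤ ε) ∧
      (∀ g g' : G, (∀ j < n, dist (a ^ j * g * (a ^ j)⁻¹) 1 ≤ ε) →
        (∀ j < n, dist (a ^ j * g' * (a ^ j)⁻¹) 1 ≤ ε) →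
        dist (g • x) (g' • x) = dist g g') ∧
      (∀ y : X, (∀ j < n, dist ((a ^ j) • y) ((a ^ j) • x) ≤ ε) →
        ∃ g : G, (∀ j < n, dist (a ^ j * g * (a ^ j)⁻¹) 1 ≤ ε) ∧ y = g • x) :=
  stmt_5_general a K hKinv ε₀ hε₀ hinj
end

section
/- Let X be a compact metric space and T : X → X continuous. Suppose there are constants d, d₁,…,d_k > 0 with Σᵢ dᵢ ≤ d and λ₁ ≥ ⋯ ≥ λ_k > 1 such that for all small δ > 0 and all small ε > 0 and all n ≥ 1, the minimal number M(ε,n) of (n,ε)-Bowen balls needed to cover X and the minimal number N(r) of r-balls needed to cover X satisfy C(ε,n)·M(ε,n) ≥ N(r(ε,n)), where C(ε,n) ≤ 2^d (λ₁−δ)^{d(n−1)} ∏_{i=1}^k (λ_i−δ)^{−d_i(n−1)} and r(ε,n) = c·ε·(λ₁−δ)^{−(n−1)} for some constant c > 0. Then h_top(T) ≥ (dim_H(X) − d)·log λ₁ + Σ_{i=1}^k d_i log λ_i, where dim_H denotes Hausdorff dimension (using dim_H(X) ≤ liminf_{r→0} log N(r)/log(1/r)). -/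
/-!
Take logarithms in `N(rₙ) ≤ Cₙ · M(ε, n)` at the scales `rₙ = c ε (λ₁ - δ)^{-(n-1)}`.
Since `log (1 / rₙ) ≈ n log (λ₁ - δ)` and `log N(r) ≥ (dim_H X - o(1)) log (1 / r)`, the
growth rate `limsup log M(ε, n) / n` is at least `(dim_H X - d) log (λ₁ - δ) + Σ dᵢ log (λᵢ - δ)`;
let `δ → 0`. The limsup is not a junk value because `M(ε, n) ≤ mⁿ` for the size `m` of an
`ε/2`-net. For empty `X` the bound reduces to `Σ dᵢ log λᵢ ≤ d log λ₁`.
-/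

open Filter Topology Real

section Covering

variable {X : Type*}

/-- The least size of a finite set `s` with every `y` `R`-related to some `x ∈ s`
(`0` if there is no such finite set). -/
noncomputable def minCoverCard (R : X → X → Prop) : ℕ :=
  sInf {c : ℕ | ∃ s : Finset X, s.card = c ∧ ∀ y : X, ∃ x ∈ s, R y x}

theorem minCoverCard_le_card {R : X → X → Prop} {s : Finset X} (hs : ∀ y, ∃ x ∈ s, R y x) :
    minCoverCard R ≤ s.card :=
  Nat.sInf_le ⟨s, rfl, hs⟩

theorem one_le_minCoverCard [Nonempty X] {R : X → X → Prop} {s : Finset X}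
    (hs : ∀ y, ∃ x ∈ s, R y x) : 1 ≤ minCoverCard R := by
  obtain ⟨t, ht, hcov⟩ := Nat.sInf_mem (⟨s.card, s, rfl, hs⟩ :
    {c : ℕ | ∃ s : Finset X, s.card = c ∧ ∀ y : X, ∃ x ∈ s, R y x}.Nonempty)
  obtain ⟨x, hx, -⟩ := hcov (Classical.arbitrary X)
  rw [minCoverCard, ← ht]
  exact Finset.card_pos.mpr ⟨x, hx⟩

theorem minCoverCard_of_isEmpty [IsEmpty X] (R : X → X → Prop) : minCoverCard R = 0 :=
  Nat.sInf_eq_zero.mpr (Or.inl ⟨∅, Finset.card_empty, isEmptyElim⟩)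

end Covering

section Metric

variable {X : Type*} [MetricSpace X]

theorem exists_finset_forall_dist_lt [CompactSpace X] {r : ℝ} (hr : 0 < r) :
    ∃ s : Finset X, ∀ y, ∃ x ∈ s, dist y x < r := by
  obtain ⟨t, -, htf, hcov⟩ := isCompact_univ.finite_cover_balls (s := (Set.univ : Set X)) hr
  refine ⟨htf.toFinset, fun y => ?_⟩
  obtain ⟨x, hx, hxy⟩ := Set.mem_iUnion₂.mp (hcov (Set.mem_univ y))
  exact ⟨x, htf.mem_toFinset.mpr hx, hxy⟩

/-- `y` lies in the closed `(n, ε)`-Bowen ball around `x`. -/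
def BowenClose (T : X → X) (n : ℕ) (ε : ℝ) (y x : X) : Prop :=
  ∀ j < n, dist (T^[j] y) (T^[j] x) ≤ ε

/-- Points whose orbits visit the same `ε/2`-balls of a finite net during `n` steps are
`(n, ε)`-close, so one representative per itinerary gives a Bowen cover. -/
theorem exists_bowen_cover_card_le_pow [Nonempty X] (T : X → X) {ε : ℝ} {F : Finset X}
    (hF : ∀ y, ∃ x ∈ F, dist y x < ε / 2) (n : ℕ) :
    ∃ s : Finset X, s.card ≤ F.card ^ n ∧ ∀ y, ∃ x ∈ s, BowenClose T n ε y x := by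
  classical
  choose net hnetF hnet using hF
  let itinerary : X → Fin n → F := fun y j => ⟨net (T^[j] y), hnetF _⟩
  refine ⟨Finset.univ.image (Function.invFun itinerary), ?_, fun y => ?_⟩
  · exact Finset.card_image_le.trans (by simp)
  refine ⟨Function.invFun itinerary (itinerary y), Finset.mem_image_of_mem _ (Finset.mem_univ _),
    fun j hj => ?_⟩
  set z := Function.invFun itinerary (itinerary y)
  have hz : net (T^[j] z) = net (T^[j] y) :=
    congrArg Subtype.val (congrFun (Function.invFun_eq ⟨y, rfl⟩ : itinerary z = _) ⟨j, hj⟩)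
  have hz' := hnet (T^[j] z)
  rw [hz, dist_comm] at hz'
  linarith [hnet (T^[j] y), dist_triangle (T^[j] y) (net (T^[j] y)) (T^[j] z)]

theorem one_le_minCoverCard_dist_lt [CompactSpace X] [Nonempty X] {r : ℝ} (hr : 0 < r) :
    1 ≤ minCoverCard (fun y x : X => dist y x < r) :=
  one_le_minCoverCard (exists_finset_forall_dist_lt hr).choose_spec

theorem one_le_minCoverCard_bowenClose [CompactSpace X] [Nonempty X] (T : X → X) {ε : ℝ}
    (hε : 0 < ε) (n : ℕ) : 1 ≤ minCoverCard (BowenClose T n ε) :=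
  have hF := (exists_finset_forall_dist_lt (X := X) (half_pos hε)).choose_spec
  one_le_minCoverCard (exists_bowen_cover_card_le_pow T hF n).choose_spec.2

theorem exists_minCoverCard_bowenClose_le_pow [CompactSpace X] [Nonempty X] (T : X → X)
    {ε : ℝ} (hε : 0 < ε) : ∃ m : ℕ, ∀ n, minCoverCard (BowenClose T n ε) ≤ m ^ n := by
  obtain ⟨F, hF⟩ := exists_finset_forall_dist_lt (X := X) (half_pos hε)
  refine ⟨F.card, fun n => ?_⟩
  obtain ⟨s, hs, hcov⟩ := exists_bowen_cover_card_le_pow T hF n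
  exact (minCoverCard_le_card hcov).trans hs

end Metric

theorem sum_mul_log_le_mul_log_of_antitone {k : ℕ} (hk : 0 < k) {w lam : Fin k → ℝ} {d : ℝ}
    (hw : ∀ i, 0 ≤ w i) (hsum : ∑ i, w i ≤ d) (hlam : ∀ i, 0 < lam i)
    (hlam₀ : 1 ≤ lam ⟨0, hk⟩) (hanti : Antitone lam) :
    ∑ i, w i * log (lam i) ≤ d * log (lam ⟨0, hk⟩) :=
  calc ∑ i, w i * log (lam i) ≤ ∑ i, w i * log (lam ⟨0, hk⟩) :=
        Finset.sum_le_sum fun i _ => mul_le_mul_of_nonneg_left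
          (log_le_log (hlam i) (hanti (Nat.zero_le i.val))) (hw i)
    _ = (∑ i, w i) * log (lam ⟨0, hk⟩) := (Finset.sum_mul ..).symm
    _ ≤ d * log (lam ⟨0, hk⟩) := mul_le_mul_of_nonneg_right hsum (log_nonneg hlam₀)

theorem log_rpow_mul_rpow_mul_prod_inv_rpow {ι : Type*} (s : Finset ι) {a q : ℝ} (ha : 0 < a)
    (hq : 0 < q) {p : ι → ℝ} (hp : ∀ i ∈ s, 0 < p i) (d : ℝ) (e : ι → ℝ) (x : ℝ) :
    log (a ^ d * q ^ (d * x) * ∏ i ∈ s, (p i ^ (e i * x))⁻¹) =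
      d * log a + x * (d * log q - ∑ i ∈ s, e i * log (p i)) := by
  have hprod : ∀ i ∈ s, (p i ^ (e i * x))⁻¹ ≠ 0 := fun i hi =>
    inv_ne_zero (rpow_pos_of_pos (hp i hi) _).ne'
  have hlog : ∀ i ∈ s, log (p i ^ (e i * x))⁻¹ = -(x * (e i * log (p i))) := fun i hi => by
    rw [log_inv, log_rpow (hp i hi)]; ring
  rw [log_mul (by positivity) (Finset.prod_ne_zero_iff.mpr hprod), log_mul (by positivity)
    (by positivity), log_rpow ha, log_rpow hq, log_prod hprod, Finset.sum_congr rfl hlog,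
    Finset.sum_neg_distrib, ← Finset.mul_sum]
  ring

theorem le_limsup_div_of_eventually_affine_le {x : ℕ → ℝ} {a b : ℝ}
    (hx : IsBoundedUnder (· ≤ ·) atTop (fun n : ℕ => x n / n))
    (h : ∀ᶠ n : ℕ in atTop, a * n + b ≤ x n) : a ≤ limsup (fun n : ℕ => x n / n) atTop := by
  have hlim : Tendsto (fun n : ℕ => (b + a * n) / (0 + 1 * n)) atTop (𝓝 a) := by
    simpa using tendsto_add_mul_div_add_mul_atTop_nhds b 0 a one_ne_zero
  rw [← hlim.limsup_eq]
  refine limsup_le_limsup ?_ hlim.isCoboundedUnder_le hx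
  filter_upwards [h] with n hn
  simpa [add_comm] using div_le_div_of_nonneg_right hn n.cast_nonneg

theorem eventually_mul_log_le_of_lt_liminf {g : ℝ → ℝ} {D D' : ℝ} (hD : D' < D)
    (hdim : D ≤ liminf (fun r => g r / log (1 / r)) (𝓝[>] 0))
    (hg : ∀ᶠ r in 𝓝[>] 0, 0 ≤ g r) :
    ∀ᶠ r in 𝓝[>] 0, D' * log (1 / r) ≤ g r := by
  have hlog : ∀ᶠ r in 𝓝[>] (0 : ℝ), 0 < log (1 / r) := by
    filter_upwards [Ioo_mem_nhdsGT one_pos] with r hr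
    exact log_pos ((one_lt_div hr.1).mpr hr.2)
  have hbdd : IsBoundedUnder (· ≥ ·) (𝓝[>] 0) (fun r => g r / log (1 / r)) :=
    ⟨0, eventually_map.mpr (by filter_upwards [hg, hlog] with r h1 h2 using div_nonneg h1 h2.le)⟩
  filter_upwards [eventually_lt_of_lt_liminf (hD.trans_le hdim) hbdd, hlog] with r hr hpos
  exact ((lt_div_iff₀ hpos).mp hr).le

theorem tendsto_mul_inv_rpow_nhdsGT_zero {q κ : ℝ} (hq : 1 < q) (hκ : 0 < κ) :
    Tendsto (fun n : ℕ => κ * (q ^ ((n : ℝ) - 1))⁻¹) atTop (𝓝[>] 0) := by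
  have hpow : Tendsto (fun n : ℕ => q ^ ((n : ℝ) - 1)) atTop atTop :=
    (tendsto_rpow_atTop_of_base_gt_one q hq).comp
      (tendsto_atTop_add_const_right _ (-1) tendsto_natCast_atTop_atTop)
  refine tendsto_nhdsWithin_iff.mpr ⟨?_, Eventually.of_forall fun n => ?_⟩
  · simpa using hpow.inv_tendsto_atTop.const_mul κ
  · have := rpow_pos_of_pos (zero_lt_one.trans hq) ((n : ℝ) - 1)
    exact mul_pos hκ (inv_pos.mpr this)

theorem le_limsup_div_of_log_covering_bound {g : ℝ → ℝ} {x : ℕ → ℝ} {D q κ A B : ℝ}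
    (hq : 1 < q) (hκ : 0 < κ)
    (hdim : D ≤ liminf (fun r => g r / log (1 / r)) (𝓝[>] 0))
    (hg : ∀ᶠ r in 𝓝[>] 0, 0 ≤ g r)
    (hx : IsBoundedUnder (· ≤ ·) atTop (fun n : ℕ => x n / n))
    (hgx : ∀ n : ℕ, 1 ≤ n → g (κ * (q ^ ((n : ℝ) - 1))⁻¹) ≤ A + ((n : ℝ) - 1) * B + x n) :
    D * log q - B ≤ limsup (fun n : ℕ => x n / n) atTop := by
  have hL : 0 < log q := log_pos hq
  have hlog : ∀ n : ℕ, log (1 / (κ * (q ^ ((n : ℝ) - 1))⁻¹)) = ((n : ℝ) - 1) * log q - log κ := by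
    intro n
    rw [one_div, mul_inv, inv_inv, log_mul (inv_ne_zero hκ.ne')
      (rpow_pos_of_pos (zero_lt_one.trans hq) _).ne', log_inv, log_rpow (zero_lt_one.trans hq)]
    ring
  refine le_of_forall_lt_imp_le_of_dense fun y hy => ?_
  obtain ⟨D', hD', rfl⟩ : ∃ D' < D, y = D' * log q - B :=
    ⟨(y + B) / log q, by rw [div_lt_iff₀ hL]; linarith, by field_simp; ring⟩
  have hev := (tendsto_mul_inv_rpow_nhdsGT_zero hq hκ).eventually
    (eventually_mul_log_le_of_lt_liminf hD' hdim hg)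
  refine le_limsup_div_of_eventually_affine_le (b := B - A - D' * (log q + log κ)) hx ?_
  filter_upwards [hev, eventually_ge_atTop 1] with n hn h1
  rw [hlog] at hn
  linarith [hgx n h1]

theorem isBoundedUnder_log_div_of_le_pow {M : ℕ → ℕ} {m : ℕ} (h : ∀ n, M n ≤ m ^ n) :
    IsBoundedUnder (· ≤ ·) atTop (fun n : ℕ => log (M n) / n) := by
  refine ⟨log m, eventually_map.mpr (Eventually.of_forall fun n => ?_)⟩
  rcases n.eq_zero_or_pos with rfl | hn
  · simpa using log_natCast_nonneg m
  rw [div_le_iff₀ (by exact_mod_cast hn), mul_comm, ← log_pow]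
  rcases (M n).eq_zero_or_pos with hM | hM
  · simpa [hM] using log_natCast_nonneg (m ^ n)
  · exact log_le_log (by exact_mod_cast hM) (by exact_mod_cast h n)

theorem le_limsup_log_div_of_covering_ineq {N : ℝ → ℕ} {M : ℕ → ℕ} {m : ℕ}
    (hN : ∀ r > 0, 1 ≤ N r) (hM : ∀ n, 1 ≤ M n) (hMm : ∀ n, M n ≤ m ^ n) {D : ℝ}
    (hdim : D ≤ liminf (fun r => log (N r) / log (1 / r)) (𝓝[>] 0))
    {ι : Type*} [Fintype ι] {q c d : ℝ} {p e : ι → ℝ} (hq : 1 < q) (hc : 0 < c)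
    (hp : ∀ i, 0 < p i)
    (hineq : ∀ n : ℕ, 1 ≤ n → (N (c * (q ^ ((n : ℝ) - 1))⁻¹) : ℝ) ≤
      ((2 : ℝ) ^ d * q ^ (d * ((n : ℝ) - 1)) * ∏ i, (p i ^ (e i * ((n : ℝ) - 1)))⁻¹) * M n) :
    (D - d) * log q + ∑ i, e i * log (p i) ≤ limsup (fun n : ℕ => log (M n) / n) atTop := by
  have hq0 : 0 < q := zero_lt_one.trans hq
  have key := le_limsup_div_of_log_covering_bound (g := fun r => log (N r))
    (x := fun n => log (M n)) (A := d * log 2)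
    (B := d * log q - ∑ i, e i * log (p i)) hq hc hdim ?_
    (isBoundedUnder_log_div_of_le_pow hMm) ?_
  · linarith
  · filter_upwards [self_mem_nhdsWithin] with r hr using log_nonneg (by exact_mod_cast hN r hr)
  intro n hn
  have hC : 0 < (2 : ℝ) ^ d * q ^ (d * ((n : ℝ) - 1)) * ∏ i, (p i ^ (e i * ((n : ℝ) - 1)))⁻¹ :=
    mul_pos (by positivity) (Finset.prod_pos fun i _ => inv_pos.mpr (rpow_pos_of_pos (hp i) _))
  have hlog := log_le_log (by exact_mod_cast hN _ (by positivity)) (hineq n hn)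
  have hMn : (M n : ℝ) ≠ 0 := Nat.cast_ne_zero.mpr (Nat.one_le_iff_ne_zero.mp (hM n))
  rwa [log_mul hC.ne' hMn, log_rpow_mul_rpow_mul_prod_inv_rpow _ two_pos hq0 fun i _ => hp i]
    at hlog

theorem stmt_6_general {X : Type*} [MetricSpace X] [CompactSpace X]
    (T : X → X)
    (k : ℕ) (hk : 0 < k) (d : ℝ)
    (dd lam : Fin k → ℝ) (hdd : ∀ i, 0 < dd i) (hsum : ∑ i, dd i ≤ d)
    (hlam : ∀ i, 1 < lam i) (hmono : Antitone lam)
    (M : ℝ → ℕ → ℕ) (N : ℝ → ℕ) (htop : ℝ)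
    (hM : ∀ ε > (0 : ℝ), ∀ n : ℕ,
      M ε n = sInf {c : ℕ | ∃ s : Finset X, s.card = c ∧
        ∀ y : X, ∃ x ∈ s, ∀ j < n, dist (T^[j] y) (T^[j] x) ≤ ε})
    (hN : ∀ r > (0 : ℝ),
      N r = sInf {c : ℕ | ∃ s : Finset X, s.card = c ∧
        ∀ y : X, ∃ x ∈ s, dist y x < r})
    (hhtop : ∀ ε > (0 : ℝ),
      Filter.limsup (fun n : ℕ => Real.log (M ε n) / n) atTop ≤ htop)
    (hdim : (dimH (Set.univ : Set X)).toReal ≤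
      Filter.liminf (fun r : ℝ => Real.log (N r) / Real.log (1 / r)) (nhdsWithin 0 (Set.Ioi 0)))
    (hineq : ∃ δ₀ > (0 : ℝ), ∃ c > (0 : ℝ), ∀ δ : ℝ, 0 < δ → δ < δ₀ →
      ∃ ε₀ > (0 : ℝ), ∀ ε : ℝ, 0 < ε → ε < ε₀ → ∀ n : ℕ, 1 ≤ n →
        (N (c * ε * ((lam ⟨0, hk⟩ - δ) ^ ((n : ℝ) - 1))⁻¹) : ℝ) ≤
          ((2 : ℝ) ^ d * (lam ⟨0, hk⟩ - δ) ^ (d * ((n : ℝ) - 1)) *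
            ∏ i, ((lam i - δ) ^ (dd i * ((n : ℝ) - 1)))⁻¹) * (M ε n : ℝ)) :
    ((dimH (Set.univ : Set X)).toReal - d) * Real.log (lam ⟨0, hk⟩) +
      ∑ i, dd i * Real.log (lam i) ≤ htop := by
  rcases isEmpty_or_nonempty X with hX | hX
  · have hM0 : ∀ n, M 1 n = 0 := fun n => (hM 1 one_pos n).trans (minCoverCard_of_isEmpty _)
    have htop0 : 0 ≤ htop := by simpa [hM0] using hhtop 1 one_pos
    have hD : (dimH (Set.univ : Set X)).toReal = 0 := by simp [Set.univ_eq_empty_iff.mpr hX]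
    have := sum_mul_log_le_mul_log_of_antitone hk (fun i => (hdd i).le) hsum
      (fun i => zero_lt_one.trans (hlam i)) (hlam _).le hmono
    rw [hD]
    linarith
  obtain ⟨δ₀, hδ₀, c, hc, hineq⟩ := hineq
  have key : ∀ᶠ t in 𝓝[>] 0, ((dimH (Set.univ : Set X)).toReal - d) * log (lam ⟨0, hk⟩ - t) +
      ∑ i, dd i * log (lam i - t) ≤ htop := by
    filter_upwards [Ioo_mem_nhdsGT hδ₀, nhdsWithin_le_nhds
      (eventually_all.mpr fun i => eventually_lt_nhds (sub_pos.mpr (hlam i)))] with t ht hlt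
    obtain ⟨ε₀, hε₀, hcover⟩ := hineq t ht.1 ht.2
    have hε := half_pos hε₀
    obtain ⟨m, hm⟩ := exists_minCoverCard_bowenClose_le_pow T hε
    refine le_trans ?_ (hhtop _ hε)
    exact le_limsup_log_div_of_covering_ineq
      (fun r hr => (one_le_minCoverCard_dist_lt hr).trans_eq (hN r hr).symm)
      (fun n => (one_le_minCoverCard_bowenClose T hε n).trans_eq (hM _ hε n).symm)
      (fun n => (hM _ hε n).trans_le (hm n)) hdim (by linarith [hlt ⟨0, hk⟩]) (mul_pos hc hε)
      (fun i => by linarith [hlt i]) (hcover (ε₀ / 2) hε (half_lt_self hε₀))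
  have hcont : ContinuousAt (fun t => ((dimH (Set.univ : Set X)).toReal - d) *
      log (lam ⟨0, hk⟩ - t) + ∑ i, dd i * log (lam i - t)) 0 := by
    fun_prop (disch := simp only [sub_zero]; exact (zero_lt_one.trans (hlam _)).ne')
  simpa using le_of_tendsto (hcont.tendsto.mono_left nhdsWithin_le_nhds) key

/-- From the covering inequality between Bowen-ball covering numbers `M` and metric
covering numbers `N`, the topological entropy is bounded below by
`(dim_H X − d)·log λ₁ + Σ dᵢ log λᵢ`. -/
theorem stmt_6 {X : Type*} [MetricSpace X] [CompactSpace X]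
    (T : X → X) (hT : Continuous T)
    (k : ℕ) (hk : 0 < k) (d : ℝ) (hd : 0 < d)
    (dd lam : Fin k → ℝ) (hdd : ∀ i, 0 < dd i) (hsum : ∑ i, dd i ≤ d)
    (hlam : ∀ i, 1 < lam i) (hmono : Antitone lam)
    (M : ℝ → ℕ → ℕ) (N : ℝ → ℕ) (htop : ℝ)
    (hM : ∀ ε > (0 : ℝ), ∀ n : ℕ,
      M ε n = sInf {c : ℕ | ∃ s : Finset X, s.card = c ∧
        ∀ y : X, ∃ x ∈ s, ∀ j < n, dist (T^[j] y) (T^[j] x) ≤ ε})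
    (hN : ∀ r > (0 : ℝ),
      N r = sInf {c : ℕ | ∃ s : Finset X, s.card = c ∧
        ∀ y : X, ∃ x ∈ s, dist y x < r})
    (hhtop : ∀ ε > (0 : ℝ),
      Filter.limsup (fun n : ℕ => Real.log (M ε n) / n) atTop ≤ htop)
    (hdim : (dimH (Set.univ : Set X)).toReal ≤
      Filter.liminf (fun r : ℝ => Real.log (N r) / Real.log (1 / r)) (nhdsWithin 0 (Set.Ioi 0)))
    (hineq : ∃ δ₀ > (0 : ℝ), ∃ c > (0 : ℝ), ∀ δ : ℝ, 0 < δ → δ < δ₀ →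
      ∃ ε₀ > (0 : ℝ), ∀ ε : ℝ, 0 < ε → ε < ε₀ → ∀ n : ℕ, 1 ≤ n →
        (N (c * ε * ((lam ⟨0, hk⟩ - δ) ^ ((n : ℝ) - 1))⁻¹) : ℝ) ≤
          ((2 : ℝ) ^ d * (lam ⟨0, hk⟩ - δ) ^ (d * ((n : ℝ) - 1)) *
            ∏ i, ((lam i - δ) ^ (dd i * ((n : ℝ) - 1)))⁻¹) * (M ε n : ℝ)) :
    ((dimH (Set.univ : Set X)).toReal - d) * Real.log (lam ⟨0, hk⟩) +
      ∑ i, dd i * Real.log (lam i) ≤ htop :=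
  stmt_6_general T k hk d dd lam hdd hsum hlam hmono M N htop hM hN hhtop hdim hineq
end
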